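/- arXiv:2508.02006 — 5 statements merged into one kernel-verified Lean document; each statement's English description precedes it below -/
import Mathlib

section
/- Let m be an even positive integer and define the linear map T : ℝ^{m/2} → ℂ by T(e_k) = -i·sin(π/m)·exp((2k-1)πi/m) for 1 ≤ k ≤ m/2. For 1 ≤ k ≤ m/2, let w_k ∈ {-1,1}^{m/2} be the vector with first k entries -1 and remaining entries +1. Then T(w_k) = exp(2kπi/m). -/
/-!
With `g n = exp (2 n π i / m)`, the formula `sin x = (e^{-ix} - e^{ix}) i / 2` turns `T e_j` into
`(g j - g (j + 1)) / 2`. Hence `T w_k` is a signed telescoping sum, equal to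
`(2 g k - g 0 - g (m / 2)) / 2`, and `g 0 = 1`, `g (m / 2) = -1` because `m` is even.
-/

open Complex Finset
open scoped Real

theorem neg_I_mul_sin_mul_exp (x y : ℂ) :
    -I * sin x * exp (y * I) = (exp ((y - x) * I) - exp ((y + x) * I)) / 2 := by
  rw [sin, show (y - x) * I = y * I + -x * I by ring, show (y + x) * I = y * I + x * I by ring,
    exp_add, exp_add]
  linear_combination (exp (y * I) * (exp (x * I) - exp (-x * I)) / 2) * I_sq

theorem sum_sign_smul_sub_succ {M : Type*} [AddCommGroup M] [Module ℝ M] (g : ℕ → M)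
    {k n : ℕ} (hk : k ≤ n) :
    ∑ j : Fin n, (if (j : ℕ) + 1 ≤ k then (-1 : ℝ) else 1) • (g j - g (j + 1)) =
      (2 : ℝ) • g k - g 0 - g n := by
  rw [Fin.sum_univ_eq_sum_range
      (fun j => (if j + 1 ≤ k then (-1 : ℝ) else 1) • (g j - g (j + 1))),
    ← sum_range_add_sum_Ico _ hk, sum_congr rfl (g := fun j => -(g j - g (j + 1))),
    sum_congr rfl (g := fun j => (g j - g (j + 1))) (s₁ := Ico k n), sum_neg_distrib,
    sum_Ico_eq_sub _ hk, sum_range_sub', sum_range_sub', two_smul]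
  · abel
  · intro j hj
    rw [if_neg (by simp at hj; omega), one_smul]
  · intro j hj
    rw [if_pos (by simpa using hj), neg_one_smul]

theorem LinearMap.apply_eq_sum_smul_apply_single {ι R M : Type*} [Fintype ι] [DecidableEq ι]
    [CommSemiring R] [AddCommMonoid M] [Module R M] (f : (ι → R) →ₗ[R] M) (x : ι → R) :
    f x = ∑ i, x i • f (Pi.single i 1) := by
  conv_lhs => rw [← (Pi.basisFun R ι).sum_repr x]
  simp only [map_sum, map_smul, Pi.basisFun_repr, Pi.basisFun_apply]

theorem exp_two_mul_half_mul_pi_mul_I_div {m : ℕ} (hm : m ≠ 0) (hme : Even m) :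
    exp (2 * ((m / 2 : ℕ) : ℂ) * π * I / m) = -1 := by
  have hm2 : 2 * ((m / 2 : ℕ) : ℂ) = m := by exact_mod_cast Nat.two_mul_div_two_of_even hme
  rw [hm2, mul_assoc, mul_div_cancel_left₀ _ (Nat.cast_ne_zero.mpr hm), exp_pi_mul_I]

theorem zonotope_map_on_wk_general (m : ℕ) (hm : 0 < m) (hme : Even m)
    (T : (Fin (m / 2) → ℝ) →ₗ[ℝ] ℂ)
    (hT : ∀ j : Fin (m / 2),
      T (Pi.single j 1) =
        -Complex.I * (Real.sin (Real.pi / m) : ℂ) *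
          Complex.exp ((2 * ((j : ℕ) + 1 : ℂ) - 1) * (Real.pi : ℂ) * Complex.I / (m : ℂ)))
    (k : ℕ) (hk : k ≤ m / 2) :
    T (fun j => if (j : ℕ) + 1 ≤ k then (-1 : ℝ) else 1) =
      Complex.exp (2 * (k : ℂ) * (Real.pi : ℂ) * Complex.I / (m : ℂ)) := by
  set g : ℕ → ℂ := fun n => exp (2 * n * π * I / m) with hg
  have hTg : ∀ j : Fin (m / 2), T (Pi.single j 1) = (1 / 2 : ℝ) • (g j - g (j + 1)) := by
    intro j
    rw [hT, ofReal_sin, real_smul]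
    convert neg_I_mul_sin_mul_exp (π / m) ((2 * ((j : ℕ) + 1 : ℂ) - 1) * π / m) using 2
    · push_cast; ring_nf
    · ring_nf
    · simp only [hg]; push_cast; ring_nf
  calc T (fun j => if (j : ℕ) + 1 ≤ k then (-1 : ℝ) else 1)
      = (1 / 2 : ℝ) • ∑ j : Fin (m / 2),
          (if (j : ℕ) + 1 ≤ k then (-1 : ℝ) else 1) • (g j - g (j + 1)) := by
        rw [T.apply_eq_sum_smul_apply_single, smul_sum]
        exact sum_congr rfl fun j _ => by rw [hTg, smul_comm]
    _ = (1 / 2 : ℝ) • ((2 : ℝ) • g k - g 0 - g (m / 2)) := by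
        rw [sum_sign_smul_sub_succ g hk]
    _ = g k := by
        have hg0 : g 0 = 1 := by simp [hg]
        have hgm : g (m / 2) = -1 := exp_two_mul_half_mul_pi_mul_I_div hm.ne' hme
        rw [hg0, hgm, sub_neg_eq_add, sub_add_cancel, smul_smul]
        norm_num

theorem zonotope_map_on_wk (m : ℕ) (hm : 0 < m) (hme : Even m)
    (T : (Fin (m / 2) → ℝ) →ₗ[ℝ] ℂ)
    (hT : ∀ j : Fin (m / 2),
      T (Pi.single j 1) =
        -Complex.I * (Real.sin (Real.pi / m) : ℂ) *
          Complex.exp ((2 * ((j : ℕ) + 1 : ℂ) - 1) * (Real.pi : ℂ) * Complex.I / (m : ℂ)))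
    (k : ℕ) (hk1 : 1 ≤ k) (hk : k ≤ m / 2) :
    T (fun j => if (j : ℕ) + 1 ≤ k then (-1 : ℝ) else 1) =
      Complex.exp (2 * (k : ℂ) * (Real.pi : ℂ) * Complex.I / (m : ℂ)) :=
  zonotope_map_on_wk_general m hm hme T hT k hk
end

section
/- Fix integers m ≥ 2, n ≥ 1, k = ⌊n/2⌋ + 1. Let G be the graph on vertex set (ℤ/m)^n in which β and γ are adjacent iff they differ in at most two coordinates (and β ≠ γ). Define V_0 = {α : n_i(α) ≤ k ∀ 1 ≤ i ≤ m-1} and V_j = {α : n_j(α) ≥ k-1} for 1 ≤ j ≤ m-1. Then every edge of G is contained in some V_j, i.e., for every edge {β,γ} of G there exists 0 ≤ j ≤ m-1 with β, γ ∈ V_j. -/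
open Finset

lemma count_le_count_add (n : ℕ) (m : ℕ) (β γ : Fin n → ZMod m) (i : ZMod m)
    (hdiff : (Finset.univ.filter fun l => β l ≠ γ l).card ≤ 2) :
    (Finset.univ.filter fun l => β l = i).card ≤
      (Finset.univ.filter fun l => γ l = i).card + 2 := by
  have hsub : (Finset.univ.filter fun l => β l = i) ⊆
      (Finset.univ.filter fun l => γ l = i) ∪ (Finset.univ.filter fun l => β l ≠ γ l) := by
    intro l hl
    simp only [mem_filter, mem_univ, true_and, mem_union] at hl ⊢
    by_cases h : β l = γ l
    · left; rw [← h]; exact hl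
    · right; exact h
  calc (Finset.univ.filter fun l => β l = i).card
      ≤ ((Finset.univ.filter fun l => γ l = i) ∪
          (Finset.univ.filter fun l => β l ≠ γ l)).card := card_le_card hsub
    _ ≤ (Finset.univ.filter fun l => γ l = i).card +
          (Finset.univ.filter fun l => β l ≠ γ l).card := card_union_le _ _
    _ ≤ (Finset.univ.filter fun l => γ l = i).card + 2 := by omega

theorem edges_covered_by_cliques (m n k : ℕ) (hm : 2 ≤ m) (hn : 1 ≤ n)
    (hk : k = n / 2 + 1) (β γ : Fin n → ZMod m) (hne : β ≠ γ)
    (hdiff : (Finset.univ.filter fun i => β i ≠ γ i).card ≤ 2) :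
    (∀ i : ZMod m, i ≠ 0 →
        (Finset.univ.filter fun l => β l = i).card ≤ k ∧
        (Finset.univ.filter fun l => γ l = i).card ≤ k) ∨
      ∃ j : ZMod m, j ≠ 0 ∧
        k - 1 ≤ (Finset.univ.filter fun l => β l = j).card ∧
        k - 1 ≤ (Finset.univ.filter fun l => γ l = j).card := by
  by_cases hall : ∀ i : ZMod m, i ≠ 0 →
      (Finset.univ.filter fun l => β l = i).card ≤ k ∧
      (Finset.univ.filter fun l => γ l = i).card ≤ k
  · exact Or.inl hall
  · right
    push_neg at hall
    obtain ⟨i, hi0, hi⟩ := hall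
    refine ⟨i, hi0, ?_⟩
    have h1 := count_le_count_add n m β γ i hdiff
    have h2 := count_le_count_add n m γ β i (by
      have : (Finset.univ.filter fun l => γ l ≠ β l) =
          (Finset.univ.filter fun l => β l ≠ γ l) := by
        apply filter_congr; intro l _; simp [ne_comm]
      rw [this]; exact hdiff)
    rcases le_or_gt ((Finset.univ.filter fun l => β l = i).card) k with h | h
    · have := hi h
      omega
    · omega
end

section
/- Let V be a finite set and V_0, V_1, ..., V_k subsets with V = ⋃_{i=0}^k V_i satisfying the running intersection property: for every 1 ≤ j ≤ k there exists s < j such that V_j ∩ (⋃_{i=0}^{j-1} V_i) ⊆ V_s. Then the graph on vertex set V whose edge set is the union of the complete graphs on each V_i is chordal. -/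
open Finset SimpleGraph

/-- A graph is chordal if every cycle of length at least 4 has a chord, i.e.
an edge of the graph joining two vertices of the cycle which is not an edge of
the cycle (equivalently, joining two nonconsecutive vertices of the cycle). -/
def IsChordal {V : Type*} (G : SimpleGraph V) : Prop :=
  ∀ ⦃v : V⦄ (w : G.Walk v v), w.IsCycle → 4 ≤ w.length →
    ∃ a b, a ∈ w.support ∧ b ∈ w.support ∧ G.Adj a b ∧ s(a, b) ∉ w.edges

/-!
Rank a vertex `x` by the first index `i` with `x ∈ V_i`. If `u` and `x` lie in a common `V_i`
and `u` is ranked no higher than `x`, then as long as `i` exceeds the rank of `x` both also lie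
in `⋃_{i' < i} V_{i'}`, so the running intersection property moves them into some `V_s` with
`s < i`; they thus end up together in `V_{rank x}`. Hence the neighbours of `x` of rank at most
that of `x` form a clique, and on a cycle of length at least 4 the two cycle-neighbours of a
vertex of maximal rank are joined by a chord.
-/

section

variable {V : Type*}

namespace SimpleGraph.Walk

variable {G : SimpleGraph V}

lemma IsCycle.snd_penultimate_notMem_edges {u : V} {c : G.Walk u u} (hc : c.IsCycle)
    (h4 : 4 ≤ c.length) : s(c.snd, c.penultimate) ∉ c.edges := by
  intro hmem
  have hnbr : c.penultimate ∈ c.toSubgraph.neighborSet (c.getVert 1) :=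
    c.mem_edges_toSubgraph.mpr hmem
  rw [hc.neighborSet_toSubgraph_internal one_ne_zero (by omega)] at hnbr
  rcases hnbr with h | h
  · rw [penultimate, Nat.sub_self, getVert_zero, hc.getVert_endpoint_iff (by omega)] at h
    omega
  · have := hc.getVert_injOn (by simp; omega) (by simp; omega) h
    omega

lemma IsCycle.exists_neighbors_notMem_edges {v x : V} {c : G.Walk v v} (hc : c.IsCycle)
    (h4 : 4 ≤ c.length) (hx : x ∈ c.support) :
    ∃ u w, s(u, x) ∈ c.edges ∧ s(x, w) ∈ c.edges ∧ u ≠ w ∧ s(u, w) ∉ c.edges := by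
  classical
  set c' := c.rotate x hx
  have hc' : c'.IsCycle := hc.rotate hx
  have hedges : ∀ e, e ∈ c'.edges ↔ e ∈ c.edges := fun e => (c.rotate_edges x hx).mem_iff
  have hlen : c'.length = c.length := c.length_rotate x hx
  refine ⟨c'.penultimate, c'.snd, ?_, ?_, hc'.snd_ne_penultimate.symm, ?_⟩
  · exact (hedges _).mp (c'.mk_penultimate_end_mem_edges hc'.not_nil)
  · exact (hedges _).mp (c'.mk_start_snd_mem_edges hc'.not_nil)
  · rw [← hedges, Sym2.eq_swap]
    exact hc'.snd_penultimate_notMem_edges (hlen ▸ h4)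

end SimpleGraph.Walk

namespace SimpleGraph

variable {G : SimpleGraph V} {α : Type*} [LinearOrder α]

def IsEliminationRank (G : SimpleGraph V) (f : V → α) : Prop :=
  ∀ x, G.IsClique {u | G.Adj x u ∧ f u ≤ f x}

theorem IsEliminationRank.isChordal {f : V → α} (hf : G.IsEliminationRank f) : IsChordal G := by
  classical
  intro v c hc h4
  obtain ⟨x, hx, hmax⟩ := c.support.toFinset.exists_max_image f ⟨v, by simp⟩
  rw [List.mem_toFinset] at hx
  obtain ⟨u, w, hux, hxw, huw, hchord⟩ := hc.exists_neighbors_notMem_edges h4 hx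
  have hu : u ∈ c.support := c.fst_mem_support_of_mem_edges hux
  have hw : w ∈ c.support := c.snd_mem_support_of_mem_edges hxw
  refine ⟨u, w, hu, hw, hf x ?_ ?_ huw, hchord⟩
  · exact ⟨(c.adj_of_mem_edges hux).symm, hmax u (List.mem_toFinset.mpr hu)⟩
  · exact ⟨c.adj_of_mem_edges hxw, hmax w (List.mem_toFinset.mpr hw)⟩

end SimpleGraph

def RunningIntersection (k : ℕ) (Vs : ℕ → Set V) : Prop :=
  ∀ j, 1 ≤ j → j ≤ k → ∃ s < j, Vs j ∩ (⋃ i < j, Vs i) ⊆ Vs s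

def cliqueUnion (k : ℕ) (Vs : ℕ → Set V) : SimpleGraph V :=
  SimpleGraph.fromRel fun a b => ∃ i ≤ k, a ∈ Vs i ∧ b ∈ Vs i

-- Junk value `0` (as `sInf ∅ = 0`) for a vertex lying in no `Vs i`.
noncomputable def firstIndex (Vs : ℕ → Set V) (x : V) : ℕ := sInf {i | x ∈ Vs i}

variable {k : ℕ} {Vs : ℕ → Set V}

lemma cliqueUnion_adj {a b : V} :
    (cliqueUnion k Vs).Adj a b ↔ a ≠ b ∧ ∃ i ≤ k, a ∈ Vs i ∧ b ∈ Vs i := by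
  simp only [cliqueUnion, SimpleGraph.fromRel_adj, and_comm (a := a ∈ _), or_self]

lemma mem_firstIndex {x : V} {i : ℕ} (h : x ∈ Vs i) : x ∈ Vs (firstIndex Vs x) :=
  Nat.sInf_mem (s := {i | x ∈ Vs i}) ⟨i, h⟩

lemma firstIndex_le {x : V} {i : ℕ} (h : x ∈ Vs i) : firstIndex Vs x ≤ i :=
  Nat.sInf_le h

namespace RunningIntersection

lemma exists_subset_of_subset_biUnion (hRIP : RunningIntersection k Vs) {S : Set V} {j : ℕ} :
    ∀ i ≤ k, S ⊆ Vs i → S ⊆ ⋃ i' ≤ j, Vs i' → ∃ i' ≤ j, S ⊆ Vs i' := by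
  intro i
  induction i using Nat.strong_induction_on with
  | _ i ih =>
    intro hik hSi hSj
    by_cases hij : i ≤ j
    · exact ⟨i, hij, hSi⟩
    obtain ⟨s, hsi, hsub⟩ := hRIP i (by omega) hik
    have hSearlier : S ⊆ ⋃ i' < i, Vs i' := hSj.trans <|
      Set.iUnion₂_subset fun i' hi' => Set.subset_biUnion_of_mem (u := Vs) (show i' < i by omega)
    exact ih s hsi (by omega) (Set.subset_inter hSi hSearlier |>.trans hsub) hSj

lemma mem_firstIndex_of_firstIndex_le (hRIP : RunningIntersection k Vs) {u x : V} {i : ℕ}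
    (hik : i ≤ k) (hu : u ∈ Vs i) (hx : x ∈ Vs i)
    (hle : firstIndex Vs u ≤ firstIndex Vs x) :
    u ∈ Vs (firstIndex Vs x) := by
  have hpair : {u, x} ⊆ ⋃ i' ≤ firstIndex Vs x, Vs i' :=
    Set.pair_subset (Set.mem_iUnion₂.mpr ⟨_, hle, mem_firstIndex hu⟩)
      (Set.mem_iUnion₂.mpr ⟨_, le_rfl, mem_firstIndex hx⟩)
  obtain ⟨i', hi', hsub⟩ :=
    hRIP.exists_subset_of_subset_biUnion i hik (Set.pair_subset hu hx) hpair
  have hxi' : firstIndex Vs x ≤ i' := firstIndex_le (hsub (by simp))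
  exact (le_antisymm hi' hxi') ▸ hsub (Set.mem_insert u _)

theorem isEliminationRank_firstIndex (hRIP : RunningIntersection k Vs) :
    (cliqueUnion k Vs).IsEliminationRank (firstIndex Vs) := by
  rintro x u ⟨hxu, hux⟩ w ⟨hxw, hwx⟩ huw
  obtain ⟨-, i, hik, hxi, hui⟩ := cliqueUnion_adj.mp hxu
  obtain ⟨-, i', hi'k, hxi', hwi'⟩ := cliqueUnion_adj.mp hxw
  refine cliqueUnion_adj.mpr ⟨huw, firstIndex Vs x, (firstIndex_le hxi).trans hik, ?_, ?_⟩
  · exact hRIP.mem_firstIndex_of_firstIndex_le hik hui hxi hux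
  · exact hRIP.mem_firstIndex_of_firstIndex_le hi'k hwi' hxi' hwx

end RunningIntersection

end

theorem running_intersection_chordal_general {V : Type*}
    (k : ℕ) (Vs : ℕ → Set V)
    (hRIP : ∀ j, 1 ≤ j → j ≤ k → ∃ s < j, Vs j ∩ (⋃ i < j, Vs i) ⊆ Vs s) :
    IsChordal (SimpleGraph.fromRel fun a b => ∃ i ≤ k, a ∈ Vs i ∧ b ∈ Vs i) := by
  have hrip : RunningIntersection k Vs := hRIP
  exact hrip.isEliminationRank_firstIndex.isChordal

theorem running_intersection_chordal {V : Type*} [Fintype V]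
    (k : ℕ) (Vs : ℕ → Set V)
    (hcover : ∀ v : V, ∃ i ≤ k, v ∈ Vs i)
    (hRIP : ∀ j, 1 ≤ j → j ≤ k → ∃ s < j, Vs j ∩ (⋃ i < j, Vs i) ⊆ Vs s) :
    IsChordal (SimpleGraph.fromRel fun a b => ∃ i ≤ k, a ∈ Vs i ∧ b ∈ Vs i) :=
  running_intersection_chordal_general k Vs hRIP
end

section
/- For any Hermitian n×n complex matrix Q, the maximum of z*Qz over z ∈ B_4^n = {z ∈ ℂ^n : z_i^4 = 1 ∀i} equals the maximum of (1/2)·vᵀ M v over v ∈ {-1,1}^{2n}, where M is the real symmetric 2n×2n matrix M = [[Re(Q), -Im(Q)], [Im(Q), Re(Q)]]. -/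
open Matrix Complex

private lemma key_identity (n : ℕ) (Q : Matrix (Fin n) (Fin n) ℂ) (x y : Fin n → ℝ) :
    ((star (fun i => (x i : ℂ) + y i * I)) ⬝ᵥ Q.mulVec (fun i => (x i : ℂ) + y i * I)).re
    = Sum.elim x y ⬝ᵥ (Matrix.fromBlocks (Q.map Complex.re) (-(Q.map Complex.im))
        (Q.map Complex.im) (Q.map Complex.re)).mulVec (Sum.elim x y) := by
  have L : ((star (fun i => (x i : ℂ) + y i * I)) ⬝ᵥ Q.mulVec (fun i => (x i : ℂ) + y i * I)).re
      = ∑ j, ∑ l, (x j * ((Q j l).re * x l) + y j * ((Q j l).im * x l)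
          + (x j * (-(Q j l).im * y l) + y j * ((Q j l).re * y l))) := by
    simp only [dotProduct, mulVec, Finset.mul_sum, Complex.re_sum, Pi.star_apply,
      RCLike.star_def]
    apply Finset.sum_congr rfl; intro j _
    apply Finset.sum_congr rfl; intro l _
    simp only [Complex.mul_re, Complex.mul_im, Complex.add_re, Complex.add_im,
      Complex.conj_re, Complex.conj_im, Complex.ofReal_re, Complex.ofReal_im,
      Complex.I_re, Complex.I_im]
    ring
  rw [L]
  simp only [dotProduct, mulVec, Fintype.sum_sum_type, Sum.elim_inl, Sum.elim_inr,
    fromBlocks_apply₁₁, fromBlocks_apply₁₂, fromBlocks_apply₂₁, fromBlocks_apply₂₂,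
    Matrix.map_apply, Matrix.neg_apply, Finset.mul_sum, mul_add, Finset.sum_add_distrib]

private lemma quad_smul (n : ℕ) (Q : Matrix (Fin n) (Fin n) ℂ) (z : Fin n → ℂ) :
    (star (fun i => (1 + I) * z i)) ⬝ᵥ Q.mulVec (fun i => (1 + I) * z i)
      = 2 * ((star z) ⬝ᵥ Q.mulVec z) := by
  have h1 : (fun i => (1 + I) * z i) = (1 + I) • z := rfl
  rw [h1, star_smul, Matrix.mulVec_smul, smul_dotProduct, dotProduct_smul, smul_eq_mul,
    smul_eq_mul]
  have h2 : (star ((1:ℂ) + I)) * (1 + I) = 2 := by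
    rw [star_add, star_one, Complex.star_def, Complex.conj_I]
    linear_combination -Complex.I_sq
  rw [← mul_assoc, h2]

private lemma B4_cases (z : ℂ) (h : z ^ 4 = 1) :
    z = 1 ∨ z = -1 ∨ z = I ∨ z = -I := by
  have h0 : (z - 1) * (z + 1) * ((z - I) * (z + I)) = 0 := by
    linear_combination h - (z ^ 2 - 1) * Complex.I_sq
  rcases mul_eq_zero.1 h0 with h1 | h1
  · rcases mul_eq_zero.1 h1 with h2 | h2
    · exact Or.inl (sub_eq_zero.1 h2)
    · exact Or.inr (Or.inl (by linear_combination h2))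
  · rcases mul_eq_zero.1 h1 with h2 | h2
    · exact Or.inr (Or.inr (Or.inl (sub_eq_zero.1 h2)))
    · exact Or.inr (Or.inr (Or.inr (by linear_combination h2)))

theorem B4_qubo_reformulation (n : ℕ) (Q : Matrix (Fin n) (Fin n) ℂ)
    (hQ : Q.IsHermitian) :
    sSup {x : ℝ | ∃ z : Fin n → ℂ, (∀ i, z i ^ 4 = 1) ∧
        x = ((star z) ⬝ᵥ Q.mulVec z).re} =
    sSup {x : ℝ | ∃ v : (Fin n ⊕ Fin n) → ℝ, (∀ i, v i = -1 ∨ v i = 1) ∧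
        x = (1 / 2) * (v ⬝ᵥ (Matrix.fromBlocks (Q.map Complex.re) (-(Q.map Complex.im))
            (Q.map Complex.im) (Q.map Complex.re)).mulVec v)} := by
  congr 1
  ext r
  constructor
  · rintro ⟨z, hz4, rfl⟩
    set x : Fin n → ℝ := fun i => ((1 + I) * z i).re with hx
    set y : Fin n → ℝ := fun i => ((1 + I) * z i).im with hy
    have hw : (fun i => (x i : ℂ) + y i * I) = fun i => (1 + I) * z i :=
      funext fun i => Complex.re_add_im _
    refine ⟨Sum.elim x y, ?_, ?_⟩
    · intro i
      have key : ∀ j, (x j = -1 ∨ x j = 1) ∧ (y j = -1 ∨ y j = 1) := by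
        intro j
        rcases B4_cases (z j) (hz4 j) with h | h | h | h <;>
          simp [hx, hy, h, Complex.add_re, Complex.add_im, Complex.mul_re, Complex.mul_im]
      cases i with
      | inl j => exact (key j).1
      | inr j => exact (key j).2
    · have hk := key_identity n Q x y
      rw [hw, quad_smul] at hk
      rw [← hk]
      simp [Complex.mul_re]
  · rintro ⟨v, hv, rfl⟩
    set x : Fin n → ℝ := fun i => v (Sum.inl i) with hx
    set y : Fin n → ℝ := fun i => v (Sum.inr i) with hy
    have hv' : v = Sum.elim x y := by
      funext i; cases i <;> rfl
    set z : Fin n → ℂ := fun i => ((x i : ℂ) + y i * I) * ((1 - I) / 2) with hz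
    have hmul : ∀ i, (1 + I) * z i = (x i : ℂ) + y i * I := by
      intro i
      rw [hz]
      have h1 : ((1:ℂ) + I) * ((1 - I) / 2) = 1 := by
        linear_combination (-1/2 : ℂ) * Complex.I_sq
      rw [mul_comm (1 + I), mul_assoc, mul_comm ((1 - I) / 2), h1, mul_one]
    refine ⟨z, ?_, ?_⟩
    · intro i
      have hzi : z i = ((x i : ℂ) + y i * I) * ((1 - I) / 2) := rfl
      rcases hv (Sum.inl i) with h1 | h1 <;> rcases hv (Sum.inr i) with h2 | h2
      · have hc : z i = -1 := by
          rw [hzi]; simp only [hx, hy, h1, h2]; push_cast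
          linear_combination (1/2 : ℂ) * Complex.I_sq
        rw [hc]; norm_num
      · have hc : z i = I := by
          rw [hzi]; simp only [hx, hy, h1, h2]; push_cast
          linear_combination (-1/2 : ℂ) * Complex.I_sq
        rw [hc]; norm_num [pow_succ, Complex.I_mul_I]
      · have hc : z i = -I := by
          rw [hzi]; simp only [hx, hy, h1, h2]; push_cast
          linear_combination (1/2 : ℂ) * Complex.I_sq
        rw [hc]; norm_num [pow_succ, Complex.I_mul_I]
      · have hc : z i = 1 := by
          rw [hzi]; simp only [hx, hy, h1, h2]; push_cast
          linear_combination (-1/2 : ℂ) * Complex.I_sq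
        rw [hc]; norm_num
    · have hk := key_identity n Q x y
      have hw : (fun i => (x i : ℂ) + y i * I) = fun i => (1 + I) * z i :=
        funext fun i => (hmul i).symm
      rw [hw, quad_smul] at hk
      rw [hv', ← hk]
      simp [Complex.mul_re]
end

section
/- Let m be even and let m ≥ 4. Define the 2×(m/2) real matrix A = sin(π/m)·[[sin(π/m), sin(3π/m), ..., sin((m-1)π/m)], [-cos(π/m), -cos(3π/m), ..., -cos((m-1)π/m)]]. Then for every 1 ≤ k ≤ m/2, A·w_k = (cos(2kπ/m), sin(2kπ/m))ᵀ, where w_k ∈ {-1,1}^{m/2} has first k entries -1 and the rest +1. -/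
open Matrix Real

lemma tele_sum (f : ℕ → ℝ) (n k : ℕ) (hk : k ≤ n) :
    ∑ j ∈ Finset.range n, (if j + 1 ≤ k then (-1:ℝ) else 1) * (f j - f (j+1)) =
      2 * f k - f 0 - f n := by
  rw [← Finset.sum_range_add_sum_Ico _ hk]
  have h1 : ∑ j ∈ Finset.range k, (if j + 1 ≤ k then (-1:ℝ) else 1) * (f j - f (j+1)) =
      -(f 0 - f k) := by
    rw [← Finset.sum_range_sub' f k, ← Finset.sum_neg_distrib]
    apply Finset.sum_congr rfl
    intro j hj
    rw [Finset.mem_range] at hj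
    rw [if_pos (by omega)]
    ring
  have h2 : ∑ j ∈ Finset.Ico k n, (if j + 1 ≤ k then (-1:ℝ) else 1) * (f j - f (j+1)) =
      f k - f n := by
    have : ∑ j ∈ Finset.Ico k n, (if j + 1 ≤ k then (-1:ℝ) else 1) * (f j - f (j+1)) =
        ∑ j ∈ Finset.Ico k n, (f j - f (j+1)) := by
      apply Finset.sum_congr rfl
      intro j hj
      rw [Finset.mem_Ico] at hj
      rw [if_neg (by omega)]
      ring
    rw [this, Finset.sum_Ico_eq_sub _ hk, Finset.sum_range_sub' f, Finset.sum_range_sub' f]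
    ring
  rw [h1, h2]; ring

theorem A_mulVec_wk (m : ℕ) (hme : Even m) (hm : 4 ≤ m)
    (k : ℕ) (hk1 : 1 ≤ k) (hk : k ≤ m / 2) :
    (Matrix.of (fun (i : Fin 2) (j : Fin (m / 2)) =>
        Real.sin (Real.pi / m) *
          (if i = 0 then Real.sin ((2 * ((j : ℕ) + 1) - 1) * Real.pi / m)
           else -Real.cos ((2 * ((j : ℕ) + 1) - 1) * Real.pi / m)))).mulVec
      (fun j : Fin (m / 2) => if (j : ℕ) + 1 ≤ k then (-1 : ℝ) else 1) =
    ![Real.cos (2 * k * Real.pi / m), Real.sin (2 * k * Real.pi / m)] := by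
  have hm0 : (m:ℝ) ≠ 0 := by positivity
  have h2n : 2 * (m / 2) = m := Nat.two_mul_div_two_of_even hme
  have h2nR : 2 * ((m / 2 : ℕ) : ℝ) = (m : ℝ) := by
    rw [← Nat.cast_ofNat, ← Nat.cast_mul, h2n]
  have h0 : (Matrix.of (fun (i : Fin 2) (j : Fin (m / 2)) =>
        Real.sin (Real.pi / m) *
          (if i = 0 then Real.sin ((2 * ((j : ℕ) + 1) - 1) * Real.pi / m)
           else -Real.cos ((2 * ((j : ℕ) + 1) - 1) * Real.pi / m)))).mulVec
      (fun j : Fin (m / 2) => if (j : ℕ) + 1 ≤ k then (-1 : ℝ) else 1) 0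
      = Real.cos (2 * k * Real.pi / m) := by
    set F : ℕ → ℝ := fun j => Real.cos (2 * j * Real.pi / m) / 2 with hF
    have key : ∀ x y : ℝ, Real.sin x * Real.sin y = Real.cos (y - x)/2 - Real.cos (y + x)/2 := by
      intro x y; rw [Real.cos_sub, Real.cos_add]; ring
    have hterm : ∀ j : ℕ,
        Real.sin (Real.pi/m) * Real.sin ((2 * ((j:ℝ) + 1) - 1) * Real.pi / m) = F j - F (j+1) := by
      intro j
      rw [key (Real.pi/m) ((2 * ((j:ℝ) + 1) - 1) * Real.pi / m), hF]
      push_cast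
      ring_nf
    have hmv : (Matrix.of (fun (i : Fin 2) (j : Fin (m / 2)) =>
        Real.sin (Real.pi / m) *
          (if i = 0 then Real.sin ((2 * ((j : ℕ) + 1) - 1) * Real.pi / m)
           else -Real.cos ((2 * ((j : ℕ) + 1) - 1) * Real.pi / m)))).mulVec
      (fun j : Fin (m / 2) => if (j : ℕ) + 1 ≤ k then (-1 : ℝ) else 1) 0
        = ∑ j ∈ Finset.range (m/2), (if j + 1 ≤ k then (-1:ℝ) else 1) * (F j - F (j+1)) := by
      rw [Matrix.mulVec, dotProduct, ← Fin.sum_univ_eq_sum_range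
        (fun j => (if j + 1 ≤ k then (-1:ℝ) else 1) * (F j - F (j+1)))]
      apply Finset.sum_congr rfl
      intro j _
      simp only [Matrix.of_apply, eq_self_iff_true, if_true]
      rw [hterm j, mul_comm]
    rw [hmv, tele_sum F _ k hk]
    have hF0 : F 0 = 1/2 := by simp [hF]
    have hFn : F (m/2) = -(1/2) := by
      have h : 2 * ((m/2:ℕ):ℝ) * Real.pi / m = Real.pi := by
        rw [h2nR]; field_simp
      simp only [hF, h, Real.cos_pi]; norm_num
    rw [hF0, hFn]
    simp only [hF]
    ring
  have h1 : (Matrix.of (fun (i : Fin 2) (j : Fin (m / 2)) =>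
        Real.sin (Real.pi / m) *
          (if i = 0 then Real.sin ((2 * ((j : ℕ) + 1) - 1) * Real.pi / m)
           else -Real.cos ((2 * ((j : ℕ) + 1) - 1) * Real.pi / m)))).mulVec
      (fun j : Fin (m / 2) => if (j : ℕ) + 1 ≤ k then (-1 : ℝ) else 1) 1
      = Real.sin (2 * k * Real.pi / m) := by
    set F : ℕ → ℝ := fun j => Real.sin (2 * j * Real.pi / m) / 2 with hF
    have key : ∀ x y : ℝ, Real.sin x * (-Real.cos y) = Real.sin (y - x)/2 - Real.sin (y + x)/2 := by
      intro x y; rw [Real.sin_sub, Real.sin_add]; ring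
    have hterm : ∀ j : ℕ,
        Real.sin (Real.pi/m) * (-Real.cos ((2 * ((j:ℝ) + 1) - 1) * Real.pi / m)) = F j - F (j+1) := by
      intro j
      rw [key (Real.pi/m) ((2 * ((j:ℝ) + 1) - 1) * Real.pi / m), hF]
      push_cast
      ring_nf
    have hmv : (Matrix.of (fun (i : Fin 2) (j : Fin (m / 2)) =>
        Real.sin (Real.pi / m) *
          (if i = 0 then Real.sin ((2 * ((j : ℕ) + 1) - 1) * Real.pi / m)
           else -Real.cos ((2 * ((j : ℕ) + 1) - 1) * Real.pi / m)))).mulVec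
      (fun j : Fin (m / 2) => if (j : ℕ) + 1 ≤ k then (-1 : ℝ) else 1) 1
        = ∑ j ∈ Finset.range (m/2), (if j + 1 ≤ k then (-1:ℝ) else 1) * (F j - F (j+1)) := by
      rw [Matrix.mulVec, dotProduct, ← Fin.sum_univ_eq_sum_range
        (fun j => (if j + 1 ≤ k then (-1:ℝ) else 1) * (F j - F (j+1)))]
      apply Finset.sum_congr rfl
      intro j _
      simp only [Matrix.of_apply]
      rw [if_neg (by decide : ¬ (1 : Fin 2) = 0), hterm j, mul_comm]
    rw [hmv, tele_sum F _ k hk]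
    have hF0 : F 0 = 0 := by simp [hF]
    have hFn : F (m/2) = 0 := by
      have h : 2 * ((m/2:ℕ):ℝ) * Real.pi / m = Real.pi := by
        rw [h2nR]; field_simp
      simp only [hF, h, Real.sin_pi]; norm_num
    rw [hF0, hFn]
    simp only [hF]
    ring
  funext i
  fin_cases i
  · exact h0
  · exact h1
end
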